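/- The set-disjointness lower-bound graph G is connected, and its diameter equals 2 if a_i ≠ b_j for all i ∈ Fin α and j ∈ Fin β (a yes-instance of set-disjointness), and equals 3 if there exist i ∈ Fin α and j ∈ Fin β with a_i = b_j (a no-instance). -/

import Mathlib

namespace SetDisjointness

/-- Vertices of the set-disjointness lower-bound graph:
`uA i`, `vB j`, `wC m`, `xD m`, and the two special vertices `u*`, `v*`. -/
abbrev Vert (α β ℓ : ℕ) := (Fin α ⊕ Fin β) ⊕ ((Fin ℓ ⊕ Fin ℓ) ⊕ Bool)

variable {α β ℓ : ℕ}

def uA (i : Fin α) : Vert α β ℓ := Sum.inl (Sum.inl i)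
def vB (j : Fin β) : Vert α β ℓ := Sum.inl (Sum.inr j)
def wC (m : Fin ℓ) : Vert α β ℓ := Sum.inr (Sum.inl (Sum.inl m))
def xD (m : Fin ℓ) : Vert α β ℓ := Sum.inr (Sum.inl (Sum.inr m))
def ustar : Vert α β ℓ := Sum.inr (Sum.inr false)
def vstar : Vert α β ℓ := Sum.inr (Sum.inr true)

/-- One direction of the edge relation of the set-disjointness lower-bound graph:
`u_i ~ w_m` iff the `m`-th bit of `a_i` is 1; `u_i ~ x_m` iff it is 0;
`v_j ~ w_m` iff the `m`-th bit of `b_j` is 0; `v_j ~ x_m` iff it is 1;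
`u*` is adjacent to all of `V_A ∪ V_C ∪ V_D`; `v*` to all of `V_B ∪ V_C ∪ V_D`. -/
def sdRel (a : Fin α → Fin ℓ → Bool) (b : Fin β → Fin ℓ → Bool) :
    Vert α β ℓ → Vert α β ℓ → Prop
  | Sum.inl (Sum.inl i), Sum.inr (Sum.inl (Sum.inl m)) => a i m = true
  | Sum.inl (Sum.inl i), Sum.inr (Sum.inl (Sum.inr m)) => a i m = false
  | Sum.inl (Sum.inr j), Sum.inr (Sum.inl (Sum.inl m)) => b j m = false
  | Sum.inl (Sum.inr j), Sum.inr (Sum.inl (Sum.inr m)) => b j m = true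
  | Sum.inr (Sum.inr false), Sum.inl (Sum.inl _) => True
  | Sum.inr (Sum.inr false), Sum.inr (Sum.inl _) => True
  | Sum.inr (Sum.inr true), Sum.inl (Sum.inr _) => True
  | Sum.inr (Sum.inr true), Sum.inr (Sum.inl _) => True
  | _, _ => False

/-- The set-disjointness lower-bound graph. -/
def SDGraph (a : Fin α → Fin ℓ → Bool) (b : Fin β → Fin ℓ → Bool) :
    SimpleGraph (Vert α β ℓ) :=
  SimpleGraph.fromRel (sdRel a b)

/-!
Index `V_C ∪ V_D` by pairs `(m, c)`, with `w_m = (m, true)` and `x_m = (m, false)`. Then `u_i`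
is adjacent to `(m, a_i m)` and `v_j` to `(m, ¬ b_j m)`, so `u_i` and `v_j` have a common
neighbour iff `a_i` and `b_j` differ in some bit; otherwise they are at distance `3`. Both hubs
`u*`, `v*` see all of `V_C ∪ V_D`, so (as `ℓ ≥ 1`) they have eccentricity `2`; every vertex is
adjacent to a hub, which bounds the diameter by `3`, and in a yes-instance every other pair of
vertices has a common neighbour, while `u*` and `v*` are not adjacent.
-/

theorem _root_.SimpleGraph.edist_le_two_of_adj_of_adj {V : Type*} {G : SimpleGraph V}
    {u v w : V} (huw : G.Adj u w) (hwv : G.Adj w v) : G.edist u v ≤ 2 := by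
  simpa using G.edist_le (.cons huw hwv.toWalk)

def core (m : Fin ℓ) : Bool → Vert α β ℓ
  | true => wC m
  | false => xD m

@[elab_as_elim]
theorem Vert.induction {motive : Vert α β ℓ → Prop} (uA : ∀ i, motive (uA i))
    (vB : ∀ j, motive (vB j)) (core : ∀ m c, motive (core m c)) (ustar : motive ustar)
    (vstar : motive vstar) (x : Vert α β ℓ) : motive x := by
  rcases x with (i | j) | ((m | m) | (_ | _))
  exacts [uA i, vB j, core m true, core m false, ustar, vstar]

section

open SimpleGraph

variable {a : Fin α → Fin ℓ → Bool} {b : Fin β → Fin ℓ → Bool}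

theorem adj_uA_core {i : Fin α} {m : Fin ℓ} {c : Bool} :
    (SDGraph a b).Adj (uA i) (core m c) ↔ a i m = c := by
  cases c <;> simp [SDGraph, sdRel, uA, core, wC, xD]

theorem adj_vB_core {j : Fin β} {m : Fin ℓ} {c : Bool} :
    (SDGraph a b).Adj (vB j) (core m c) ↔ b j m = !c := by
  cases c <;> simp [SDGraph, sdRel, vB, core, wC, xD]

theorem adj_ustar_core (m : Fin ℓ) (c : Bool) : (SDGraph a b).Adj ustar (core m c) := by
  cases c <;> simp [SDGraph, sdRel, ustar, core, wC, xD]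

theorem adj_vstar_core (m : Fin ℓ) (c : Bool) : (SDGraph a b).Adj vstar (core m c) := by
  cases c <;> simp [SDGraph, sdRel, vstar, core, wC, xD]

theorem adj_ustar_uA (i : Fin α) : (SDGraph a b).Adj ustar (uA i) := by
  simp [SDGraph, sdRel, ustar, uA]

theorem adj_vstar_vB (j : Fin β) : (SDGraph a b).Adj vstar (vB j) := by
  simp [SDGraph, sdRel, vstar, vB]

theorem not_adj_ustar_vstar : ¬(SDGraph a b).Adj (ustar : Vert α β ℓ) vstar := by
  simp [SDGraph, sdRel, ustar, vstar]

theorem not_adj_uA_vB (i : Fin α) (j : Fin β) : ¬(SDGraph a b).Adj (uA i) (vB j) := by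
  simp [SDGraph, sdRel, uA, vB]

theorem commonNeighbors_uA_vB_eq_empty {i : Fin α} {j : Fin β} (hij : a i = b j) :
    (SDGraph a b).commonNeighbors (uA i) (vB j) = ∅ := by
  ext x
  induction x using Vert.induction with
  | core m c => simp [mem_commonNeighbors, adj_uA_core, adj_vB_core, hij]
  | _ => simp [mem_commonNeighbors, SDGraph, sdRel, uA, vB, ustar, vstar]

theorem eccent_ustar_le_two (m : Fin ℓ) : (SDGraph a b).eccent ustar ≤ 2 := by
  refine (eccent_le_iff _ _).2 fun x => ?_
  induction x using Vert.induction with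
  | uA i => exact (edist_eq_one_iff_adj.2 (adj_ustar_uA i)).trans_le one_le_two
  | vB j =>
    exact edist_le_two_of_adj_of_adj (adj_ustar_core m _)
      ((adj_vB_core (c := !b j m)).2 (Bool.not_not _).symm).symm
  | core m c => exact (edist_eq_one_iff_adj.2 (adj_ustar_core m c)).trans_le one_le_two
  | ustar => simp
  | vstar =>
    exact edist_le_two_of_adj_of_adj (adj_ustar_core m true) (adj_vstar_core m true).symm

theorem eccent_vstar_le_two (m : Fin ℓ) : (SDGraph a b).eccent vstar ≤ 2 := by
  refine (eccent_le_iff _ _).2 fun x => ?_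
  induction x using Vert.induction with
  | uA i => exact edist_le_two_of_adj_of_adj (adj_vstar_core m _) (adj_uA_core.2 rfl).symm
  | vB j => exact (edist_eq_one_iff_adj.2 (adj_vstar_vB j)).trans_le one_le_two
  | core m c => exact (edist_eq_one_iff_adj.2 (adj_vstar_core m c)).trans_le one_le_two
  | ustar =>
    exact edist_le_two_of_adj_of_adj (adj_vstar_core m true) (adj_ustar_core m true).symm
  | vstar => simp

theorem edist_ustar_le_one_or_edist_vstar_le_one (x : Vert α β ℓ) :
    (SDGraph a b).edist ustar x ≤ 1 ∨ (SDGraph a b).edist vstar x ≤ 1 := by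
  simp only [edist_le_one_iff_adj_or_eq]
  induction x using Vert.induction with
  | uA i => exact .inl (.inl (adj_ustar_uA i))
  | vB j => exact .inr (.inl (adj_vstar_vB j))
  | core m c => exact .inl (.inl (adj_ustar_core m c))
  | ustar => exact .inl (.inr rfl)
  | vstar => exact .inr (.inr rfl)

theorem ediam_le_three (m : Fin ℓ) : (SDGraph a b).ediam ≤ 3 := by
  refine ediam_le_of_edist_le fun s t => ?_
  obtain ⟨h, hs, ht⟩ :
      ∃ h, (SDGraph a b).edist s h ≤ 1 ∧ (SDGraph a b).eccent h ≤ 2 := by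
    rcases edist_ustar_le_one_or_edist_vstar_le_one s with hs | hs
    · exact ⟨ustar, edist_comm.le.trans hs, eccent_ustar_le_two m⟩
    · exact ⟨vstar, edist_comm.le.trans hs, eccent_vstar_le_two m⟩
  calc (SDGraph a b).edist s t ≤ (SDGraph a b).edist s h + (SDGraph a b).edist h t :=
        SimpleGraph.edist_triangle
    _ ≤ 1 + 2 := add_le_add hs (edist_le_eccent.trans ht)
    _ = 3 := by norm_num

theorem edist_uA_vB_le_two_of_ne {i : Fin α} {j : Fin β} (hij : a i ≠ b j) :
    (SDGraph a b).edist (uA i) (vB j) ≤ 2 := by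
  obtain ⟨m, hm⟩ := Function.ne_iff.mp hij
  exact edist_le_two_of_adj_of_adj (adj_uA_core.2 rfl)
    (adj_vB_core.2 (Bool.eq_not.2 (Ne.symm hm))).symm

theorem ediam_le_two_of_forall_ne (m : Fin ℓ) (hab : ∀ i j, a i ≠ b j) :
    (SDGraph a b).ediam ≤ 2 := by
  have hu := eccent_ustar_le_two (a := a) (b := b) m
  have hv := eccent_vstar_le_two (a := a) (b := b) m
  have hub (x) : (SDGraph a b).edist x ustar ≤ 2 ∧ (SDGraph a b).edist x vstar ≤ 2 :=
    ⟨edist_comm.le.trans (edist_le_eccent.trans hu),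
      edist_comm.le.trans (edist_le_eccent.trans hv)⟩
  refine ediam_le_of_edist_le fun s t => ?_
  induction s using Vert.induction with
  | uA i =>
    induction t using Vert.induction with
    | uA i' => exact edist_le_two_of_adj_of_adj (adj_ustar_uA i).symm (adj_ustar_uA i')
    | vB j => exact edist_uA_vB_le_two_of_ne (hab i j)
    | core m' c => exact edist_le_two_of_adj_of_adj (adj_ustar_uA i).symm (adj_ustar_core m' c)
    | _ => simp [hub]
  | vB j =>
    induction t using Vert.induction with
    | uA i => exact edist_comm.le.trans (edist_uA_vB_le_two_of_ne (hab i j))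
    | vB j' => exact edist_le_two_of_adj_of_adj (adj_vstar_vB j).symm (adj_vstar_vB j')
    | core m' c => exact edist_le_two_of_adj_of_adj (adj_vstar_vB j).symm (adj_vstar_core m' c)
    | _ => simp [hub]
  | core m c =>
    induction t using Vert.induction with
    | uA i => exact edist_le_two_of_adj_of_adj (adj_ustar_core m c).symm (adj_ustar_uA i)
    | vB j => exact edist_le_two_of_adj_of_adj (adj_vstar_core m c).symm (adj_vstar_vB j)
    | core m' c' =>
      exact edist_le_two_of_adj_of_adj (adj_ustar_core m c).symm (adj_ustar_core m' c')
    | _ => simp [hub]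
  | ustar => exact edist_le_eccent.trans hu
  | vstar => exact edist_le_eccent.trans hv

theorem two_le_ediam : 2 ≤ (SDGraph a b).ediam := by
  have : 1 < (SDGraph a b).edist ustar vstar := by
    rw [← not_le, edist_le_one_iff_adj_or_eq]
    exact not_or.2 ⟨not_adj_ustar_vstar, by simp [ustar, vstar]⟩
  exact (Order.add_one_le_of_lt this).trans edist_le_ediam

theorem three_le_ediam_of_eq {i : Fin α} {j : Fin β} (hij : a i = b j) :
    3 ≤ (SDGraph a b).ediam :=
  le_trans (Order.add_one_le_of_lt <| two_lt_edist_iff.2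
    ⟨by simp [uA, vB], not_adj_uA_vB i j, commonNeighbors_uA_vB_eq_empty hij⟩) edist_le_ediam

end

/-- The set-disjointness lower-bound graph is connected; its diameter is `2` on
yes-instances (all `a_i ≠ b_j`) and `3` on no-instances (some `a_i = b_j`). -/
theorem sd_connected_and_diam (hl : 1 ≤ ℓ) (a : Fin α → Fin ℓ → Bool)
    (b : Fin β → Fin ℓ → Bool) :
    (SDGraph a b).Connected ∧
      ((∀ (i : Fin α) (j : Fin β), a i ≠ b j) → (SDGraph a b).diam = 2) ∧
      ((∃ (i : Fin α) (j : Fin β), a i = b j) → (SDGraph a b).diam = 3) := by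
  have m : Fin ℓ := ⟨0, hl⟩
  refine ⟨SimpleGraph.connected_of_ediam_ne_top
    (ne_top_of_le_ne_top (by simp) (ediam_le_three m)), fun hab => ?_, fun ⟨i, j, hij⟩ => ?_⟩
  · rw [SimpleGraph.diam, le_antisymm (ediam_le_two_of_forall_ne m hab) two_le_ediam]
    rfl
  · rw [SimpleGraph.diam, le_antisymm (ediam_le_three m) (three_le_ediam_of_eq hij)]
    rfl

end SetDisjointness
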